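/- For the double integrator ẋ₁ = x₂, ẋ₂ = u with non-symmetric control set u ∈ [1,2] and target {0}, the reachable set R(t) (backward, at time t) is convex for each t, but the union R_≤(t) = ∪_{0≤s≤t} R(s) is not convex for large t, and the family R(t) is not nested: there exist 0 < t₁ < t₂ with R(t₁) ⊄ R(t₂). -/

import Mathlib

/-!
Each `R(t)` is the image of the convex set of admissible controls under a linear map, hence
convex. Since `1 ≤ u ≤ 2`, every point `x ∈ R(s)` satisfies
`-s² ≤ x₁` and `-2s ≤ x₂ ≤ -s`. Thus `R(t₁)` and `R(t₂)` are disjoint once `2t₁ < t₂`, and the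
point `(-1/8, -1/4) = ¾ · 0 + ¼ · (-1/2, -1)`, a convex combination of points of `R(0)` and
`R(1)`, lies in no `R(s)`: its second coordinate forces `s ≤ 1/4`, and then `-1/8 < -s²`.
-/

open MeasureTheory Set intervalIntegral

section ProdIntegral

variable {E F : Type*} [NormedAddCommGroup E] [NormedAddCommGroup F] [NormedSpace ℝ E]
  [NormedSpace ℝ F] {f : ℝ → E × F} {μ : Measure ℝ} {a b : ℝ}

theorem IntervalIntegrable.fst (hf : IntervalIntegrable f μ a b) :
    IntervalIntegrable (fun x => (f x).1) μ a b :=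
  ⟨hf.1.fst, hf.2.fst⟩

theorem IntervalIntegrable.snd (hf : IntervalIntegrable f μ a b) :
    IntervalIntegrable (fun x => (f x).2) μ a b :=
  ⟨hf.1.snd, hf.2.snd⟩

variable [CompleteSpace E] [CompleteSpace F]

theorem intervalIntegral.fst_integral (hf : IntervalIntegrable f μ a b) :
    (∫ x in a..b, f x ∂μ).1 = ∫ x in a..b, (f x).1 ∂μ :=
  ((ContinuousLinearMap.fst ℝ E F).intervalIntegral_comp_comm hf).symm

theorem intervalIntegral.snd_integral (hf : IntervalIntegrable f μ a b) :
    (∫ x in a..b, f x ∂μ).2 = ∫ x in a..b, (f x).2 ∂μ :=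
  ((ContinuousLinearMap.snd ℝ E F).intervalIntegral_comp_comm hf).symm

end ProdIntegral

theorem intervalIntegral.integral_mul_mem_Icc {w u : ℝ → ℝ} {a b m M : ℝ} (hab : a ≤ b)
    (hw : ∀ x ∈ Icc a b, 0 ≤ w x) (hu : ∀ x ∈ Icc a b, u x ∈ Icc m M)
    (hwi : IntervalIntegrable w volume a b)
    (hwui : IntervalIntegrable (fun x => w x * u x) volume a b) :
    ∫ x in a..b, w x * u x ∈ Icc (m * ∫ x in a..b, w x) (M * ∫ x in a..b, w x) := by
  rw [← integral_const_mul, ← integral_const_mul]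
  constructor
  · refine integral_mono_on hab (hwi.const_mul m) hwui fun x hx => ?_
    nlinarith [hw x hx, (hu x hx).1]
  · refine integral_mono_on hab hwui (hwi.const_mul M) fun x hx => ?_
    nlinarith [hw x hx, (hu x hx).2]

theorem intervalIntegral.integral_upper_sub_id (a b : ℝ) :
    ∫ x in a..b, (b - x) = (b - a) ^ 2 / 2 := by
  rw [integral_comp_sub_left (fun x => x), integral_id]
  ring

namespace DoubleIntegrator

/-- Backward reachable set at time `t` of `ẋ₁ = x₂, ẋ₂ = u`, `u ∈ U`, from the target `{0}`:
the points `-∫₀ᵗ Φ(t,τ) B̄ u(τ) dτ` with `Φ(t,τ) = [[1, -(t-τ)], [0, 1]]`, `B̄ = (0, -1)ᵀ`. -/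
def reachableSet (U : Set ℝ) (t : ℝ) : Set (ℝ × ℝ) :=
  {x | ∃ u : ℝ → ℝ, (∀ τ, u τ ∈ U) ∧
    IntervalIntegrable (fun τ => ((t - τ) * u τ, u τ)) volume 0 t ∧
    x = -(∫ τ in (0 : ℝ)..t, (((t - τ) * u τ, u τ) : ℝ × ℝ))}

variable {U : Set ℝ}

theorem neg_mul_mem_reachableSet {c : ℝ} (hc : c ∈ U) (t : ℝ) :
    (-(c * (t ^ 2 / 2)), -(c * t)) ∈ reachableSet U t := by
  have hint : IntervalIntegrable (fun τ => (((t - τ) * c, c) : ℝ × ℝ)) volume 0 t :=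
    (by fun_prop : Continuous fun τ : ℝ => (((t - τ) * c, c) : ℝ × ℝ)).intervalIntegrable 0 t
  have hend : ∫ τ in (0 : ℝ)..t, (((t - τ) * c, c) : ℝ × ℝ) = (c * (t ^ 2 / 2), c * t) := by
    refine Prod.ext ?_ ?_
    · rw [fst_integral hint, intervalIntegral.integral_mul_const, integral_upper_sub_id,
        sub_zero, mul_comm]
    · rw [snd_integral hint, intervalIntegral.integral_const, sub_zero, smul_eq_mul, mul_comm]
  exact ⟨fun _ => c, fun _ => hc, hint, by rw [hend, Prod.neg_mk]⟩

theorem convex_reachableSet (hU : Convex ℝ U) (t : ℝ) : Convex ℝ (reachableSet U t) := by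
  rintro _ ⟨u, hu, hui, rfl⟩ _ ⟨v, hv, hvi, rfl⟩ a b ha hb hab
  have hmix : (fun τ => (((t - τ) * (a * u τ + b * v τ), a * u τ + b * v τ) : ℝ × ℝ)) =
      fun τ => a • (((t - τ) * u τ, u τ) : ℝ × ℝ) + b • ((t - τ) * v τ, v τ) := by
    ext τ
    · simp only [Prod.fst_add, Prod.smul_fst, smul_eq_mul]
      ring
    · simp only [Prod.snd_add, Prod.smul_snd, smul_eq_mul]
  refine ⟨fun τ => a * u τ + b * v τ, fun τ => hU (hu τ) (hv τ) ha hb hab, ?_, ?_⟩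
  · rw [hmix]
    exact (hui.smul a).add (hvi.smul b)
  · rw [hmix, integral_add (f := fun τ => a • _) (g := fun τ => b • _) (hui.smul a) (hvi.smul b),
      intervalIntegral.integral_smul, intervalIntegral.integral_smul]
    simp only [smul_neg, neg_add]

theorem reachableSet_Icc_subset {m M t : ℝ} (ht : 0 ≤ t) :
    reachableSet (Icc m M) t ⊆
      Icc (-(M * (t ^ 2 / 2))) (-(m * (t ^ 2 / 2))) ×ˢ Icc (-(M * t)) (-(m * t)) := by
  rintro _ ⟨u, hu, hint, rfl⟩
  have hfst := integral_mul_mem_Icc ht (fun τ hτ => sub_nonneg.2 hτ.2) (fun τ _ => hu τ)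
    ((by fun_prop : Continuous fun τ : ℝ => t - τ).intervalIntegrable 0 t) hint.fst
  have hsnd := integral_mul_mem_Icc ht (fun _ _ => zero_le_one) (fun τ _ => hu τ)
    intervalIntegrable_const (by simpa only [one_mul] using hint.snd)
  simp only [integral_upper_sub_id, one_mul, intervalIntegral.integral_const, sub_zero,
    smul_eq_mul, mul_one] at hfst hsnd
  simp only [mem_prod, Prod.fst_neg, Prod.snd_neg, fst_integral hint, snd_integral hint,
    neg_mem_Icc_iff, neg_neg]
  exact ⟨hfst, hsnd⟩

theorem disjoint_reachableSet_Icc {m M t₁ t₂ : ℝ} (ht₁ : 0 ≤ t₁) (ht₂ : 0 ≤ t₂)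
    (h : M * t₁ < m * t₂) : Disjoint (reachableSet (Icc m M) t₁) (reachableSet (Icc m M) t₂) :=
  disjoint_left.2 fun _ hx₁ hx₂ =>
    absurd (reachableSet_Icc_subset ht₁ hx₁).2.1 <| not_le.2 <|
      (reachableSet_Icc_subset ht₂ hx₂).2.2.trans_lt (neg_lt_neg h)

theorem not_convex_biUnion_reachableSet {t : ℝ} (ht : 1 ≤ t) :
    ¬ Convex ℝ (⋃ s ∈ Icc (0 : ℝ) t, reachableSet (Icc 1 2) s) := by
  intro hconv
  have h₀ : (0 : ℝ × ℝ) ∈ ⋃ s ∈ Icc (0 : ℝ) t, reachableSet (Icc 1 2) s :=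
    mem_biUnion ⟨le_rfl, zero_le_one.trans ht⟩ (by
      simpa [Prod.zero_eq_mk] using neg_mul_mem_reachableSet (right_mem_Icc.2 one_le_two) 0)
  have h₁ : ((-(1 / 2), -1) : ℝ × ℝ) ∈ ⋃ s ∈ Icc (0 : ℝ) t, reachableSet (Icc 1 2) s :=
    mem_biUnion ⟨zero_le_one, ht⟩ (by
      simpa using neg_mul_mem_reachableSet (left_mem_Icc.2 one_le_two) 1)
  have hmid := hconv h₀ h₁ (by norm_num : (0 : ℝ) ≤ 3 / 4) (by norm_num : (0 : ℝ) ≤ 1 / 4)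
    (by norm_num)
  rw [smul_zero, zero_add, Prod.smul_mk] at hmid
  obtain ⟨s, hs, hx⟩ := mem_iUnion₂.1 hmid
  obtain ⟨⟨hx₁, -⟩, -, hx₂⟩ := reachableSet_Icc_subset hs.1 hx
  norm_num at hx₁ hx₂
  nlinarith [hs.1]

end DoubleIntegrator

/-- Double integrator with non-symmetric control set `u ∈ [1,2]`, target `{0}`:
each backward reachable set `R(t)` is convex, the union `R_≤(t) = ⋃_{0≤s≤t} R(s)`
is not convex for large `t`, and the family is not nested: there exist
`0 < t₁ < t₂` with `¬ R(t₁) ⊆ R(t₂)`. -/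
theorem stmt18 (R : ℝ → Set (ℝ × ℝ))
    (hR : ∀ t : ℝ, R t = {x : ℝ × ℝ | ∃ u : ℝ → ℝ,
      (∀ τ, u τ ∈ Icc (1 : ℝ) 2) ∧
      IntervalIntegrable (fun τ => ((t - τ) * u τ, u τ)) volume 0 t ∧
      x = -(∫ τ in (0 : ℝ)..t, (((t - τ) * u τ, u τ) : ℝ × ℝ))}) :
    (∀ t : ℝ, Convex ℝ (R t)) ∧
    (∃ t₀ : ℝ, 0 < t₀ ∧ ∀ t : ℝ, t₀ ≤ t → ¬ Convex ℝ (⋃ s ∈ Icc (0 : ℝ) t, R s)) ∧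
    (∃ t₁ t₂ : ℝ, 0 < t₁ ∧ t₁ < t₂ ∧ ¬ R t₁ ⊆ R t₂) := by
  obtain rfl : R = DoubleIntegrator.reachableSet (Icc 1 2) := funext hR
  refine ⟨DoubleIntegrator.convex_reachableSet (convex_Icc 1 2),
    ⟨1, one_pos, fun _ => DoubleIntegrator.not_convex_biUnion_reachableSet⟩,
    ⟨1, 3, one_pos, by norm_num, fun hsub => ?_⟩⟩
  have hx := DoubleIntegrator.neg_mul_mem_reachableSet (left_mem_Icc.2 one_le_two) 1
  have hdisj := DoubleIntegrator.disjoint_reachableSet_Icc (m := 1) (M := 2) zero_le_one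
    (by norm_num : (0 : ℝ) ≤ 3) (by norm_num)
  exact disjoint_left.1 hdisj hx (hsub hx)
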